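/- arXiv:2206.15344 — 2 statements merged into one kernel-verified Lean document; each statement's English description precedes it below -/
import Mathlib

section
/- Let X be a tree order with a rank function ρ, and let x ∈ X be non-terminal with ρ(x) a successor ordinal. Then there is exactly one connected component above x of rank ρ(x), and every other connected component above x has rank ρ(x) + 1. -/
/-- A tree order: a partial order with a minimum element (the root) in which
the set of predecessors of any element is a chain. -/
def IsTreeOrder (X : Type) [PartialOrder X] : Prop :=
  (∃ r : X, ∀ x : X, r ≤ x) ∧ ∀ x : X, IsChain (· ≤ ·) {y : X | y ≤ x}

/-- A branch: a maximal chain. -/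
def IsBranch {X : Type} [PartialOrder X] (B : Set X) : Prop :=
  IsMaxChain (· ≤ ·) B

/-- A ray: a final segment of a branch. -/
def IsRay {X : Type} [PartialOrder X] (R : Set X) : Prop :=
  ∃ B : Set X, IsBranch B ∧ R ⊆ B ∧ ∀ a ∈ R, ∀ b ∈ B, a ≤ b → b ∈ R

/-- A branchwise-real tree: a tree order in which every branch is
order-isomorphic to a real interval and every two elements have a meet. -/
def IsBranchwiseReal (X : Type) [PartialOrder X] : Prop :=
  IsTreeOrder X ∧
  (∀ B : Set X, IsBranch B → ∃ I : Set ℝ, I.OrdConnected ∧ Nonempty (B ≃o I)) ∧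
  (∀ x y : X, ∃ m : X, m ≤ x ∧ m ≤ y ∧ ∀ z : X, z ≤ x → z ≤ y → z ≤ m)

/-- The set of connected components above `x`: equivalence classes of
`{y | y > x}` under `y ∼ z` iff `∃ w > x, w ≤ y ∧ w ≤ z`. -/
def ComponentsAbove {X : Type} [PartialOrder X] (x : X) : Set (Set X) :=
  {C | ∃ y : X, x < y ∧ C = {z : X | ∃ w : X, x < w ∧ w ≤ y ∧ w ≤ z}}

/-- The degree of a point: the number of connected components above it. -/
noncomputable def degreeOf {X : Type} [PartialOrder X] (x : X) : Cardinal :=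
  Cardinal.mk (ComponentsAbove x)

/-- Rigidity: the only order-automorphism is the identity. -/
def Rigid (X : Type) [PartialOrder X] : Prop :=
  ∀ f : X ≃o X, ∀ x : X, f x = x

/-- A continuous ℝ-grading: a strictly order-preserving map to ℝ whose
restriction to every interval `[x,y]` is an order isomorphism onto `[ℓ x, ℓ y]`. -/
def IsContinuousGrading {X : Type} [PartialOrder X] (ℓ : X → ℝ) : Prop :=
  StrictMono ℓ ∧ ∀ x y : X, x < y →
    ∃ e : Set.Icc x y ≃o Set.Icc (ℓ x) (ℓ y), ∀ z : Set.Icc x y, (e z : ℝ) = ℓ (z : X)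

/-- A tree is continuously gradable if it admits a continuous ℝ-grading. -/
def ContinuouslyGradable (X : Type) [PartialOrder X] : Prop :=
  ∃ ℓ : X → ℝ, IsContinuousGrading ℓ

/-- A rank function: an order-preserving ordinal-valued function whose image on
every branch is downwards-closed, whose fibre at `0` or a limit is an antichain,
and whose fibre at any successor is a disjoint union of pairwise incomparable rays. -/
def IsRankFunction {X : Type} [PartialOrder X] (ρ : X → Ordinal) : Prop :=
  Monotone ρ ∧
  (∀ B : Set X, IsBranch B → ∀ α β : Ordinal, β ≤ α → α ∈ ρ '' B → β ∈ ρ '' B) ∧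
  (∀ α : Ordinal, (α = 0 ∨ Order.IsSuccLimit α) → IsAntichain (· ≤ ·) (ρ ⁻¹' {α})) ∧
  (∀ α β : Ordinal, α = β + 1 →
    ∃ 𝒮 : Set (Set X), (ρ ⁻¹' {α} = ⋃₀ 𝒮) ∧ (∀ R ∈ 𝒮, IsRay R) ∧
      ∀ R ∈ 𝒮, ∀ R' ∈ 𝒮, R ≠ R' → ∀ a ∈ R, ∀ b ∈ R', ¬a ≤ b ∧ ¬b ≤ a)

/-- The rank of a component: the minimum rank of its elements. -/
noncomputable def componentRank {X : Type} [PartialOrder X] (ρ : X → Ordinal) (C : Set X) :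
    Ordinal :=
  sInf (ρ '' C)

/-!
Since `ρ x` is a successor, `x` lies on one of the rays making up its fibre, and that ray
continues strictly above `x` because a maximal chain through a non-terminal point cannot end
there. Rays of one fibre are pairwise incomparable, so every point above `x` of rank `ρ x` lies
on this same ray; points of a ray are comparable, hence all of them lie in one component, which
is therefore the unique component of rank `ρ x`. Conversely, on a branch from `x` through a
point `y` of any component, downward closure of the ranks produces a point of rank `ρ x + 1`
between `x` and `y` (unless `ρ y ≤ ρ x + 1` already), so no component has rank above
`ρ x + 1`.
-/

variable {X : Type} [PartialOrder X]

def componentAbove (x y : X) : Set X :=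
  {z | ∃ w, x < w ∧ w ≤ y ∧ w ≤ z}

section componentAbove

variable {x y z : X}

lemma mem_componentsAbove {C : Set X} :
    C ∈ ComponentsAbove x ↔ ∃ y, x < y ∧ C = componentAbove x y :=
  Iff.rfl

lemma mem_componentAbove_of_le (hxy : x < y) (hyz : y ≤ z) : z ∈ componentAbove x y :=
  ⟨y, hxy, le_rfl, hyz⟩

lemma mem_componentAbove_self (hxy : x < y) : y ∈ componentAbove x y :=
  mem_componentAbove_of_le hxy le_rfl

lemma lt_of_mem_componentAbove (hz : z ∈ componentAbove x y) : x < z :=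
  let ⟨_, hxw, _, hwz⟩ := hz
  hxw.trans_le hwz

lemma mem_componentAbove_comm : z ∈ componentAbove x y ↔ y ∈ componentAbove x z :=
  ⟨fun ⟨w, hxw, hwy, hwz⟩ => ⟨w, hxw, hwz, hwy⟩, fun ⟨w, hxw, hwz, hwy⟩ => ⟨w, hxw, hwy, hwz⟩⟩

end componentAbove

namespace IsTreeOrder

variable {x y z : X}

lemma le_total_of_le (hX : IsTreeOrder X) {a b c : X} (ha : a ≤ c) (hb : b ≤ c) :
    a ≤ b ∨ b ≤ a :=
  (hX.2 c).total ha hb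

lemma componentAbove_subset (hX : IsTreeOrder X) (hz : z ∈ componentAbove x y) :
    componentAbove x z ⊆ componentAbove x y := by
  obtain ⟨w, hxw, hwy, hwz⟩ := hz
  rintro t ⟨v, hxv, hvz, hvt⟩
  rcases hX.le_total_of_le hwz hvz with hwv | hvw
  · exact ⟨w, hxw, hwy, hwv.trans hvt⟩
  · exact ⟨v, hxv, hvw.trans hwy, hvt⟩

lemma componentAbove_eq (hX : IsTreeOrder X) (hz : z ∈ componentAbove x y) :
    componentAbove x z = componentAbove x y :=
  (hX.componentAbove_subset hz).antisymm
    (hX.componentAbove_subset (mem_componentAbove_comm.1 hz))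

end IsTreeOrder

lemma IsMaxChain.exists_gt_of_lt {B : Set X} (hB : IsMaxChain (· ≤ ·) B) {x y : X}
    (hx : x ∈ B) (hxy : x < y) : ∃ b ∈ B, x < b := by
  by_contra! h
  have hle : ∀ b ∈ B, b ≤ x := fun b hb =>
    (hB.1.total hb hx).elim id fun hxb => (eq_of_le_of_not_lt hxb (h b hb)).ge
  have hyB : y ∈ B :=
    (hB.2 (hB.1.insert fun b hb _ => Or.inr ((hle b hb).trans hxy.le))
      (Set.subset_insert y B)).symm ▸ Set.mem_insert y B
  exact (hle y hyB).not_gt hxy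

section componentRank

variable {ρ : X → Ordinal} {C : Set X} {x y z : X}

lemma componentRank_le (hz : z ∈ C) : componentRank ρ C ≤ ρ z :=
  csInf_le' (Set.mem_image_of_mem ρ hz)

lemma exists_mem_rank_eq_componentRank (hC : C.Nonempty) :
    ∃ z ∈ C, ρ z = componentRank ρ C :=
  csInf_mem (hC.image ρ)

lemma le_componentRank_componentAbove (hρ : Monotone ρ) (hxy : x < y) :
    ρ x ≤ componentRank ρ (componentAbove x y) :=
  le_csInf ((Set.nonempty_of_mem (mem_componentAbove_self hxy)).image ρ) <| by
    rintro _ ⟨z, hz, rfl⟩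
    exact hρ (lt_of_mem_componentAbove hz).le

end componentRank

namespace IsRankFunction

variable {ρ : X → Ordinal} {x y z : X} {β : Ordinal}

lemma exists_mem_Icc_rank_eq (hρ : IsRankFunction ρ) (hxy : x ≤ y) {α : Ordinal}
    (hxα : ρ x ≤ α) (hαy : α ≤ ρ y) : ∃ w, x ≤ w ∧ w ≤ y ∧ ρ w = α := by
  rcases hxα.eq_or_lt with rfl | hxα
  · exact ⟨x, le_rfl, hxy, rfl⟩
  rcases hαy.eq_or_lt with rfl | hαy
  · exact ⟨y, hxy, le_rfl, rfl⟩
  obtain ⟨B, hB, hxyB⟩ := (IsChain.pair hxy).exists_maxChain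
  have hxB : x ∈ B := hxyB (Set.mem_insert x _)
  have hyB : y ∈ B := hxyB (Set.mem_insert_of_mem x rfl)
  obtain ⟨w, hwB, rfl⟩ := hρ.2.1 B hB (ρ y) α hαy.le ⟨y, hyB, rfl⟩
  refine ⟨w, ?_, ?_, rfl⟩
  · exact (hB.1.total hxB hwB).resolve_right fun hwx => (hρ.1 hwx).not_gt hxα
  · exact (hB.1.total hwB hyB).resolve_right fun hyw => (hρ.1 hyw).not_gt hαy

lemma exists_ray_of_rank_eq_add_one (hρ : IsRankFunction ρ) (hβ : ρ x = β + 1) :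
    ∃ R, IsRay R ∧ x ∈ R ∧ (∀ a ∈ R, ρ a = ρ x) ∧ ∀ a, x ≤ a → ρ a = ρ x → a ∈ R := by
  obtain ⟨𝒮, hfib, hray, hinc⟩ := hρ.2.2.2 _ β hβ
  have mem_fib : ∀ a, ρ a = ρ x ↔ ∃ R ∈ 𝒮, a ∈ R := fun a => by
    simpa only [Set.mem_preimage, Set.mem_singleton_iff, Set.mem_sUnion] using
      Set.ext_iff.1 hfib a
  obtain ⟨R, hR, hxR⟩ := (mem_fib x).1 rfl
  refine ⟨R, hray R hR, hxR, fun a ha => (mem_fib a).2 ⟨R, hR, ha⟩, fun a hxa ha => ?_⟩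
  obtain ⟨R', hR', haR'⟩ := (mem_fib a).1 ha
  by_contra haR
  exact (hinc R hR R' hR' (by rintro rfl; exact haR haR') x hxR a haR').1 hxa

lemma exists_gt_rank_eq (hρ : IsRankFunction ρ) (hβ : ρ x = β + 1) (hxy : x < y) :
    ∃ b, x < b ∧ ρ b = ρ x := by
  obtain ⟨R, ⟨B, hB, hRB, hRfinal⟩, hxR, hρR, -⟩ := hρ.exists_ray_of_rank_eq_add_one hβ
  obtain ⟨b, hbB, hxb⟩ := hB.exists_gt_of_lt (hRB hxR) hxy
  exact ⟨b, hxb, hρR b (hRfinal x hxR b hbB hxb.le)⟩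

lemma le_total_of_rank_eq (hρ : IsRankFunction ρ) (hβ : ρ x = β + 1) (hxy : x ≤ y)
    (hxz : x ≤ z) (hy : ρ y = ρ x) (hz : ρ z = ρ x) : y ≤ z ∨ z ≤ y := by
  obtain ⟨R, ⟨B, hB, hRB, -⟩, -, -, hR⟩ := hρ.exists_ray_of_rank_eq_add_one hβ
  exact hB.1.total (hRB (hR y hxy hy)) (hRB (hR z hxz hz))

lemma componentRank_componentAbove_le_add_one (hρ : IsRankFunction ρ) (hxy : x < y) :
    componentRank ρ (componentAbove x y) ≤ ρ x + 1 := by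
  by_cases hy : ρ x + 1 ≤ ρ y
  · obtain ⟨w, hxw, hwy, hw⟩ := hρ.exists_mem_Icc_rank_eq hxy.le (lt_add_one (ρ x)).le hy
    have hxw : x < w := hxw.lt_of_ne <| by
      rintro rfl
      exact (lt_add_one (ρ x)).ne hw
    exact hw ▸ componentRank_le ⟨w, hxw, hwy, le_rfl⟩
  · exact (componentRank_le (mem_componentAbove_self hxy)).trans (not_le.1 hy).le

end IsRankFunction

/-- In a ranked tree order, if `x` is non-terminal and `ρ x` is a successor, then
exactly one connected component above `x` has rank `ρ x`, and every other
connected component above `x` has rank `ρ x + 1`. -/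
theorem stmt_9 (X : Type) [PartialOrder X] (hX : IsTreeOrder X)
    (ρ : X → Ordinal) (hρ : IsRankFunction ρ) (x : X) (hnt : ∃ y : X, x < y)
    (hx : ∃ β : Ordinal, ρ x = β + 1) :
    (∃! C : Set X, C ∈ ComponentsAbove x ∧ componentRank ρ C = ρ x) ∧
      ∀ C ∈ ComponentsAbove x, componentRank ρ C ≠ ρ x → componentRank ρ C = ρ x + 1 := by
  obtain ⟨β, hβ⟩ := hx
  obtain ⟨y, hxy⟩ := hnt
  obtain ⟨b, hxb, hb⟩ := hρ.exists_gt_rank_eq hβ hxy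
  have eq_of_rank_eq : ∀ C ∈ ComponentsAbove x, componentRank ρ C = ρ x →
      C = componentAbove x b := by
    intro C hC hrank
    obtain ⟨z, hxz, rfl⟩ := mem_componentsAbove.1 hC
    obtain ⟨c, hc, hcρ⟩ := exists_mem_rank_eq_componentRank (ρ := ρ)
      (Set.nonempty_of_mem (mem_componentAbove_self hxz))
    have hxc := lt_of_mem_componentAbove hc
    rw [← hX.componentAbove_eq hc]
    rcases hρ.le_total_of_rank_eq hβ hxb.le hxc.le hb (hcρ.trans hrank) with hbc | hcb
    · exact hX.componentAbove_eq (mem_componentAbove_of_le hxb hbc)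
    · exact (hX.componentAbove_eq (mem_componentAbove_of_le hxc hcb)).symm
  have hb_rank : componentRank ρ (componentAbove x b) = ρ x :=
    ((componentRank_le (mem_componentAbove_self hxb)).trans_eq hb).antisymm
      (le_componentRank_componentAbove hρ.1 hxb)
  refine ⟨⟨_, ⟨mem_componentsAbove.2 ⟨b, hxb, rfl⟩, hb_rank⟩, fun C hC => eq_of_rank_eq C hC.1 hC.2⟩, ?_⟩
  intro C hC hne
  obtain ⟨z, hxz, rfl⟩ := mem_componentsAbove.1 hC
  exact (hρ.componentRank_componentAbove_le_add_one hxz).antisymm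
    (Order.add_one_le_of_lt ((le_componentRank_componentAbove hρ.1 hxz).lt_of_ne' hne))
end

section
/- Fix a cardinal κ ≥ 2 and let U_κ be the set of all functions r : [0,a) → κ, for nonnegative reals a, which are piecewise constant to the right (for every t ∈ [0,a) there is ε > 0 such that r is constant on [t, t+ε)), partially ordered by function extension. Then U_κ is a branchwise-real tree, and the function ℓ sending r : [0,a) → κ to a is a continuous ℝ-grading of U_κ. -/
/-- The universal tree `U_κ` over a type `C` of colours: functions `r : [0,a) → C`
(coded as total `Option C`-valued functions on ℝ which are `some` exactly on `[0,a)`)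
which are piecewise constant to the right. -/
@[ext]
structure UTree (C : Type) : Type where
  dom : ℝ
  fn : ℝ → Option C
  dom_nonneg : 0 ≤ dom
  isSome_iff : ∀ t : ℝ, (fn t).isSome ↔ (0 ≤ t ∧ t < dom)
  piecewise_const : ∀ t : ℝ, 0 ≤ t → t < dom →
    ∃ ε > (0:ℝ), ∀ s : ℝ, t ≤ s → s < t + ε → s < dom → fn s = fn t

/-- `U_κ` is ordered by function extension. -/
instance (C : Type) : PartialOrder (UTree C) where
  le r s := r.dom ≤ s.dom ∧ ∀ t : ℝ, 0 ≤ t → t < r.dom → s.fn t = r.fn t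
  le_refl r := ⟨le_rfl, fun _ _ _ => rfl⟩
  le_trans r s t hrs hst :=
    ⟨hrs.1.trans hst.1, fun u hu hur =>
      (hst.2 u hu (hur.trans_le hrs.1)).trans (hrs.2 u hu hur)⟩
  le_antisymm r s hrs hsr := by
    have hd : r.dom = s.dom := le_antisymm hrs.1 hsr.1
    have hf : r.fn = s.fn := by
      funext t
      by_cases ht : 0 ≤ t ∧ t < r.dom
      · exact (hrs.2 t ht.1 ht.2).symm
      · have h1 : r.fn t = none := by
          rw [← Option.not_isSome_iff_eq_none, r.isSome_iff]; exact ht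
        have h2 : s.fn t = none := by
          rw [← Option.not_isSome_iff_eq_none, s.isSome_iff, ← hd]; exact ht
        rw [h1, h2]
    ext : 1
    · exact hd
    · exact hf

/-! The extension order on `U_C` is a tree whose predecessors of `y` are exactly the restrictions
of `y` to the intervals `[0, c)`, `0 ≤ c ≤ y.dom`. So on every chain of predecessors the domain
length is an order embedding that hits every intermediate value, and this alone makes it a
continuous grading and makes every maximal chain order-isomorphic to a real interval. Meets are
restrictions to the supremum of the lengths of the common lower bounds. -/

section GradedTree

variable {X : Type} [PartialOrder X] {ℓ : X → ℝ}

theorem StrictMono.le_iff_le_of_isChain (hℓ : StrictMono ℓ) {S : Set X}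
    (hS : IsChain (· ≤ ·) S) {a b : X} (ha : a ∈ S) (hb : b ∈ S) : ℓ a ≤ ℓ b ↔ a ≤ b := by
  refine ⟨fun h => ?_, fun h => hℓ.monotone h⟩
  by_contra hab
  have hba : b < a := ((hS.total ha hb).resolve_left hab).lt_of_ne fun e => hab (e ▸ le_rfl)
  exact (hℓ hba).not_ge h

theorem IsMaxChain.mem_of_le (hIic : ∀ y : X, IsChain (· ≤ ·) (Set.Iic y)) {B : Set X}
    (hB : IsMaxChain (· ≤ ·) B) {s z : X} (hs : s ∈ B) (hzs : z ≤ s) : z ∈ B := by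
  have hchain : IsChain (· ≤ ·) (insert z B) := hB.1.insert fun u hu _ =>
    (hB.1.total hs hu).elim (fun hsu => Or.inl (hzs.trans hsu))
      (fun hus => (hIic s).total hzs hus)
  exact hB.2 hchain (Set.subset_insert z B) ▸ Set.mem_insert z B

variable (hℓ : StrictMono ℓ) (hIic : ∀ y : X, IsChain (· ≤ ·) (Set.Iic y))
  (hval : ∀ ⦃x y : X⦄, x ≤ y → ∀ c ∈ Set.Icc (ℓ x) (ℓ y), ∃ z ≤ y, ℓ z = c)
include hℓ hIic hval

theorem isContinuousGrading_of_exists_le : IsContinuousGrading ℓ := by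
  refine ⟨hℓ, fun x y hxy => ?_⟩
  have hle_iff {a b : X} (ha : a ≤ y) (hb : b ≤ y) : ℓ a ≤ ℓ b ↔ a ≤ b :=
    hℓ.le_iff_le_of_isChain (hIic y) ha hb
  let f : Set.Icc x y ↪o ℝ :=
    OrderEmbedding.ofMapLEIff (fun z => ℓ z) fun a b => hle_iff a.2.2 b.2.2
  have hrange : Set.range f = Set.Icc (ℓ x) (ℓ y) := by
    refine Set.Subset.antisymm ?_ fun c hc => ?_
    · exact Set.range_subset_iff.2 fun z => ⟨hℓ.monotone z.2.1, hℓ.monotone z.2.2⟩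
    obtain ⟨z, hzy, rfl⟩ := hval hxy.le c hc
    exact ⟨⟨z, (hle_iff hxy.le hzy).1 hc.1, hzy⟩, rfl⟩
  exact ⟨f.orderIso.trans (OrderIso.setCongr _ _ hrange), fun _ => rfl⟩

theorem exists_ordConnected_orderIso_of_isMaxChain {B : Set X} (hB : IsMaxChain (· ≤ ·) B) :
    ∃ I : Set ℝ, I.OrdConnected ∧ Nonempty (B ≃o I) := by
  let f : B ↪o ℝ :=
    OrderEmbedding.ofMapLEIff (fun z => ℓ z) fun a b => hℓ.le_iff_le_of_isChain hB.1 a.2 b.2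
  refine ⟨Set.range f, Set.ordConnected_of_Ioo ?_, ⟨f.orderIso⟩⟩
  rintro _ ⟨r, rfl⟩ _ ⟨s, rfl⟩ hrs c hc
  have hrs' : r.1 ≤ s.1 := f.le_iff_le.1 hrs.le
  obtain ⟨z, hzs, rfl⟩ := hval hrs' c ⟨hc.1.le, hc.2.le⟩
  exact ⟨⟨z, hB.mem_of_le hIic s.2 hzs⟩, rfl⟩

end GradedTree

namespace UTree

variable {C : Type}

theorem eq_of_le_of_dom_le {r s : UTree C} (h : r ≤ s) (hd : s.dom ≤ r.dom) : r = s :=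
  le_antisymm h ⟨hd, fun t ht hts => (h.2 t ht (hts.trans_le hd)).symm⟩

theorem dom_strictMono : StrictMono (fun r : UTree C => r.dom) := fun _ _ hrs =>
  hrs.le.1.lt_of_ne fun hd => hrs.ne (eq_of_le_of_dom_le hrs.le hd.ge)

theorem isChain_Iic (y : UTree C) : IsChain (· ≤ ·) (Set.Iic y) := by
  intro r (hr : r ≤ y) s (hs : s ≤ y) _
  rcases le_total r.dom s.dom with h | h
  · exact Or.inl ⟨h, fun t ht htr => (hs.2 t ht (htr.trans_le h)).symm.trans (hr.2 t ht htr)⟩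
  · exact Or.inr ⟨h, fun t ht hts => (hr.2 t ht (hts.trans_le h)).symm.trans (hs.2 t ht hts)⟩

def root : UTree C where
  dom := 0
  fn _ := none
  dom_nonneg := le_rfl
  isSome_iff _ := by simp only [Option.isSome_none, Bool.false_eq_true, false_iff]; grind
  piecewise_const _ ht htd := absurd (ht.trans_lt htd) (lt_irrefl 0)

theorem root_le (x : UTree C) : (root : UTree C) ≤ x :=
  ⟨x.dom_nonneg, fun _ ht htd => absurd htd ht.not_gt⟩

noncomputable def restrict (y : UTree C) (d : ℝ) (h0 : 0 ≤ d) (hd : d ≤ y.dom) : UTree C where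
  dom := d
  fn t := if t < d then y.fn t else none
  dom_nonneg := h0
  isSome_iff t := by
    by_cases h : t < d
    · rw [if_pos h, y.isSome_iff]
      exact ⟨fun ht => ⟨ht.1, h⟩, fun ht => ⟨ht.1, h.trans_le hd⟩⟩
    · simp only [if_neg h, Option.isSome_none, Bool.false_eq_true, false_iff]
      exact fun ht => h ht.2
  piecewise_const t ht htd := by
    obtain ⟨ε, hε, hconst⟩ := y.piecewise_const t ht (htd.trans_le hd)
    refine ⟨ε, hε, fun s hts hsε hsd => ?_⟩
    simp only [if_pos hsd, if_pos htd]
    exact hconst s hts hsε (hsd.trans_le hd)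

theorem restrict_le (y : UTree C) (d : ℝ) (h0 : 0 ≤ d) (hd : d ≤ y.dom) :
    restrict y d h0 hd ≤ y :=
  ⟨hd, fun _ _ htd => (if_pos htd).symm⟩

theorem exists_le_dom_eq (y : UTree C) {c : ℝ} (h0 : 0 ≤ c) (hc : c ≤ y.dom) :
    ∃ z ≤ y, z.dom = c :=
  ⟨restrict y c h0 hc, restrict_le y c h0 hc, rfl⟩

theorem exists_meet (x y : UTree C) :
    ∃ m : UTree C, m ≤ x ∧ m ≤ y ∧ ∀ z : UTree C, z ≤ x → z ≤ y → z ≤ m := by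
  set S : Set ℝ := (fun z : UTree C => z.dom) '' {z | z ≤ x ∧ z ≤ y}
  have hroot : (0 : ℝ) ∈ S := ⟨root, ⟨root_le x, root_le y⟩, rfl⟩
  have hSbdd : BddAbove S := ⟨x.dom, by rintro _ ⟨z, hz, rfl⟩; exact hz.1.1⟩
  set d := sSup S
  have hd0 : 0 ≤ d := le_csSup hSbdd hroot
  have hdx : d ≤ x.dom := csSup_le ⟨0, hroot⟩ (by rintro _ ⟨z, hz, rfl⟩; exact hz.1.1)
  have hdy : d ≤ y.dom := csSup_le ⟨0, hroot⟩ (by rintro _ ⟨z, hz, rfl⟩; exact hz.2.1)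
  have hagree {t : ℝ} (ht : 0 ≤ t) (htd : t < d) : y.fn t = x.fn t := by
    obtain ⟨_, ⟨z, hz, rfl⟩, htz⟩ := exists_lt_of_lt_csSup ⟨0, hroot⟩ htd
    exact (hz.2.2 t ht htz).trans (hz.1.2 t ht htz).symm
  set m := restrict x d hd0 hdx
  have hmx : m ≤ x := restrict_le x d hd0 hdx
  refine ⟨m, hmx, ⟨hdy, fun t ht htd => (hagree ht htd).trans (if_pos htd).symm⟩,
    fun z hzx hzy => ?_⟩
  exact (dom_strictMono.le_iff_le_of_isChain (isChain_Iic x) hzx hmx).1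
    (le_csSup hSbdd ⟨z, ⟨hzx, hzy⟩, rfl⟩)

end UTree

theorem stmt_17_general (C : Type) :
    IsBranchwiseReal (UTree C) ∧ IsContinuousGrading (fun r : UTree C => r.dom) := by
  have hval : ∀ ⦃x y : UTree C⦄, x ≤ y → ∀ c ∈ Set.Icc x.dom y.dom, ∃ z ≤ y, z.dom = c :=
    fun x y _ c hc => y.exists_le_dom_eq (x.dom_nonneg.trans hc.1) hc.2
  refine ⟨⟨⟨⟨UTree.root, UTree.root_le⟩, UTree.isChain_Iic⟩, fun B hB => ?_, UTree.exists_meet⟩,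
    isContinuousGrading_of_exists_le UTree.dom_strictMono UTree.isChain_Iic hval⟩
  exact exists_ordConnected_orderIso_of_isMaxChain UTree.dom_strictMono UTree.isChain_Iic hval hB

/-- For any type of colours `C` with `2 ≤ #C`, the universal tree `U_C` is a
branchwise-real tree, and the map sending `r : [0,a) → C` to `a` is a continuous
ℝ-grading of it. -/
theorem stmt_17 (C : Type) (hC : 2 ≤ Cardinal.mk C) :
    IsBranchwiseReal (UTree C) ∧ IsContinuousGrading (fun r : UTree C => r.dom) :=
  stmt_17_general C
end
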